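/- Let σ : S¹ → S¹ be a continuous orientation-preserving bijection, let bₙ be a minimal n-cycle that is an attractor, and let c_m be any m-cycle of σ. Then n divides m and c_m equals the k-fold concatenation bₙᵏ of bₙ (up to cyclic permutation), where k = m/n. In particular bₙ is, up to cyclic permutation, the unique minimal cycle of σ. -/
import Mathlib


open Filter Topology

/-- The circle `ℝ/ℤ`. -/
abbrev S1 : Type := AddCircle (1 : ℝ)

/-- `σ` is orientation preserving: it lifts to a strictly increasing map of `ℝ`
commuting with translation by `1`. -/
def OrientPres (σ : S1 → S1) : Prop :=
  ∃ f : ℝ → ℝ, StrictMono f ∧ (∀ x : ℝ, f (x + 1) = f x + 1) ∧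
    ∀ x : ℝ, σ ((x : ℝ) : S1) = ((f x : ℝ) : S1)

/-- `s` is an `n`-cycle for `σ`: `σ` maps each entry to the next, indices mod `n`. -/
def IsCycle {n : ℕ} (σ : S1 → S1) (s : Fin n → S1) : Prop :=
  ∀ i : Fin n, σ (s i) = s ⟨(i.val + 1) % n, Nat.mod_lt _ i.pos⟩

/-- `b` is an attractor: for every `t` and every fixed `k < n`, the `n`-tuples
`(σ^{nj+k}(t), …, σ^{nj+k+n-1}(t))` converge as `j → ∞` to some cyclic permutation of `b`. -/
def IsAttractor {n : ℕ} (σ : S1 → S1) (b : Fin n → S1) : Prop :=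
  ∀ t : S1, ∀ k : ℕ, k < n → ∃ p : ℕ,
    Tendsto (fun j : ℕ => fun i : Fin n => σ^[n * j + k + i.val] t) atTop
      (𝓝 (fun i : Fin n => b ⟨(i.val + p) % n, Nat.mod_lt _ i.pos⟩))

theorem stmt_10 (σ : S1 → S1) (hcont : Continuous σ) (hbij : Function.Bijective σ)
    (hor : OrientPres σ) (n : ℕ) (hn : 0 < n) (b : Fin n → S1) (hb : IsCycle σ b)
    (hmin : Function.Injective b) (hatt : IsAttractor σ b)
    (m : ℕ) (hm : 0 < m) (c : Fin m → S1) (hc : IsCycle σ c) :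
    n ∣ m ∧ ∃ p : ℕ, ∀ i : Fin m, c i = b ⟨(i.val + p) % n, Nat.mod_lt _ hn⟩ := by
  set c0 : S1 := c ⟨0, hm⟩ with hc0
  have key : ∀ N : ℕ, σ^[N] c0 = c ⟨N % m, Nat.mod_lt _ hm⟩ := by
    intro N
    induction N with
    | zero =>
      simp only [Function.iterate_zero, id_eq, hc0]
      exact congrArg c (Fin.ext (by simp))
    | succ N ih =>
      rw [Function.iterate_succ_apply', ih, hc]
      congr 1
      ext
      show (N % m + 1) % m = (N + 1) % m
      exact Nat.mod_add_mod N m 1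
  obtain ⟨p, hp⟩ := hatt c0 0 hn
  have hconst : ∀ j0 : ℕ, (fun i : Fin n => σ^[n * j0 + 0 + i.val] c0)
      = fun i : Fin n => b ⟨(i.val + p) % n, Nat.mod_lt _ i.pos⟩ := by
    intro j0
    have hmono : StrictMono (fun j : ℕ => j0 + m * j) := by
      intro a b hab
      have := Nat.mul_lt_mul_of_pos_left hab hm
      exact Nat.add_lt_add_left this j0
    have hsub := hp.comp hmono.tendsto_atTop
    have heq : ((fun j : ℕ => fun i : Fin n => σ^[n * j + 0 + i.val] c0) ∘
        (fun j : ℕ => j0 + m * j))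
        = fun _ : ℕ => (fun i : Fin n => σ^[n * j0 + 0 + i.val] c0) := by
      funext j
      funext i
      simp only [Function.comp_apply]
      rw [key, key]
      congr 1
      ext
      show (n * (j0 + m * j) + 0 + i.val) % m = (n * j0 + 0 + i.val) % m
      have h : n * (j0 + m * j) + 0 + i.val = (n * j0 + 0 + i.val) + m * (n * j) := by ring
      rw [h, Nat.add_mul_mod_self_left]
    rw [heq] at hsub
    exact tendsto_nhds_unique tendsto_const_nhds hsub
  have F : ∀ N : ℕ, c ⟨N % m, Nat.mod_lt _ hm⟩ = b ⟨(N + p) % n, Nat.mod_lt _ hn⟩ := by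
    intro N
    have h1 := congrFun (hconst (N / n)) ⟨N % n, Nat.mod_lt _ hn⟩
    have h2 : n * (N / n) + 0 + N % n = N := by
      have := Nat.div_add_mod N n; omega
    rw [h2, key] at h1
    rw [h1]
    congr 1
    ext
    show (N % n + p) % n = (N + p) % n
    exact Nat.mod_add_mod N n p
  have hd : n ∣ m := by
    have h0 := F 0
    have hmm := F m
    have hidx : (⟨m % m, Nat.mod_lt _ hm⟩ : Fin m) = ⟨0 % m, Nat.mod_lt _ hm⟩ := by
      ext; simp
    rw [hidx, h0] at hmm
    have hval : ((0 : ℕ) + p) % n = (m + p) % n := congrArg Fin.val (hmin hmm)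
    have hmod : Nat.ModEq n (0 + p) (m + p) := hval
    have h0m : Nat.ModEq n 0 m := Nat.ModEq.add_right_cancel' p hmod
    exact (Nat.modEq_zero_iff_dvd).mp h0m.symm
  refine ⟨hd, p, ?_⟩
  intro i
  have hF := F i.val
  have hidx : (⟨i.val % m, Nat.mod_lt _ hm⟩ : Fin m) = i := by
    ext; simp [Nat.mod_eq_of_lt i.isLt]
  rw [hidx] at hF
  exact hF
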